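/- arXiv:0804.2115 — 2 statements merged into one kernel-verified Lean document; each statement's English description precedes it below -/
import Mathlib

section
/- If S₁ is a Gröbner–Shirshov basis in k⟨X⟩ and S₂ is a Gröbner–Shirshov basis in k⟨Y⟩ (each with respect to deg-lex orders), then S₁ ∪ S₂ is a Gröbner–Shirshov basis in k⟨X⟩ ⊗ k⟨Y⟩ with respect to the induced deg-lex order on X*Y*. -/
/-- A monomial order: a well-founded strict total order compatible with multiplication. -/
def MonOrd {M : Type*} [Monoid M] (lt : M → M → Prop) : Prop :=
  IsStrictTotalOrder M lt ∧ WellFounded lt ∧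
    ∀ u v w₁ w₂ : M, lt u v → lt (w₁ * u * w₂) (w₁ * v * w₂)

/-- `m` is the leading word of `f` with respect to the order `lt`. -/
def IsLeadR {k M : Type*} [Semiring k] (lt : M → M → Prop)
    (f : MonoidAlgebra k M) (m : M) : Prop :=
  m ∈ f.coeff.support ∧ ∀ u ∈ f.coeff.support, u ≠ m → lt u m

/-- `f` is monic: its leading coefficient is `1`. -/
def MonicR {k M : Type*} [Semiring k] (lt : M → M → Prop) (f : MonoidAlgebra k M) : Prop :=
  ∃ m, IsLeadR lt f m ∧ f.coeff m = 1

/-- The monomial `m` viewed as an element of the monoid algebra. -/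
noncomputable def mono (k : Type*) {M : Type*} [Semiring k] [Monoid M] (m : M) :
    MonoidAlgebra k M := MonoidAlgebra.of k M m

/-- `h` is trivial modulo `(S, w)`: it is a linear combination `Σ αᵢ aᵢ sᵢ bᵢ`
with `sᵢ ∈ S` and leading words `aᵢ s̄ᵢ bᵢ < w`. -/
def TrivModR {k M : Type*} [Semiring k] [Monoid M] (lt : M → M → Prop)
    (S : Set (MonoidAlgebra k M)) (w : M) (h : MonoidAlgebra k M) : Prop :=
  ∃ (n : ℕ) (α : Fin n → k) (a b : Fin n → M) (s : Fin n → MonoidAlgebra k M),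
    (∀ i, s i ∈ S) ∧
    h = ∑ i, α i • (mono k (a i) * s i * mono k (b i)) ∧
    ∀ i, ∃ m, IsLeadR lt (s i) m ∧ lt (a i * m * b i) w

/-- Gröbner–Shirshov basis in a free associative algebra `k⟨Z⟩`:
all intersection and inclusion compositions are trivial. -/
def FIsGSB {k Z : Type*} [Ring k] (lt : FreeMonoid Z → FreeMonoid Z → Prop)
    (S : Set (MonoidAlgebra k (FreeMonoid Z))) : Prop :=
  (∀ s ∈ S, MonicR lt s) ∧
  ∀ f ∈ S, ∀ g ∈ S, ∀ mf mg : FreeMonoid Z, IsLeadR lt f mf → IsLeadR lt g mg →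
    ((∀ a b : FreeMonoid Z, mf * b = a * mg →
        (mf * b).length < mf.length + mg.length →
        TrivModR lt S (mf * b) (f * mono k b - mono k a * g)) ∧
     (∀ a b : FreeMonoid Z, mf = a * mg * b →
        TrivModR lt S mf (f - mono k a * g * mono k b)))

/-- the deg-lex order on words induced by an order on letters -/
def degLex {A : Type*} (ltA : A → A → Prop) (u v : FreeMonoid A) : Prop :=
  u.length < v.length ∨ (u.length = v.length ∧ List.Lex ltA u.toList v.toList)

/-- Normal words of `k⟨X⟩ ⊗ k⟨Y⟩`: the monoid `X* × Y*`
(whose multiplication is `(u^X u^Y)(v^X v^Y) = u^X v^X u^Y v^Y`). -/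
abbrev NW (X Y : Type*) := FreeMonoid X × FreeMonoid Y

/-- the (deg-)lex order on `N = X*Y*` built from orders on `X*` and `Y*`:
`u > v` iff `u^X > v^X` or (`u^X = v^X` and `u^Y > v^Y`). -/
def lexNW {X Y : Type*} (ltX : FreeMonoid X → FreeMonoid X → Prop)
    (ltY : FreeMonoid Y → FreeMonoid Y → Prop) (u v : NW X Y) : Prop :=
  ltX u.1 v.1 ∨ (u.1 = v.1 ∧ ltY u.2 v.2)

/-- All compositions `(f,g)_w = p` in `k⟨X⟩ ⊗ k⟨Y⟩`, where `mf, mg` are the leading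
words of `f, g`.  The cases are: 1.1 `X`-inclusion only, 1.2 `Y`-inclusion only,
1.3 `X,Y`-inclusion, 1.4 `X,Y`-skew-inclusion, 2.1 `X`-intersection only,
2.2 `Y`-intersection only, 2.3 `X,Y`-intersection, 2.4 `X,Y`-skew-intersection,
3.1 `X`-inclusion and `Y`-intersection, 3.2 `X`-intersection and `Y`-inclusion. -/
def IsComp {k X Y : Type*} [Ring k] (f g : MonoidAlgebra k (NW X Y))
    (mf mg : NW X Y) (p : MonoidAlgebra k (NW X Y)) (w : NW X Y) : Prop :=
  let e : NW X Y → MonoidAlgebra k (NW X Y) := fun m => mono k m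
  let fx := mf.1; let fy := mf.2; let gx := mg.1; let gy := mg.2
  -- 1.1 X-inclusion only
  (∃ (a b : FreeMonoid X) (c : FreeMonoid Y), fx = a * gx * b ∧
     ((w = (fx, fy * c * gy) ∧ p = f * e (1, c * gy) - e (a, fy * c) * g * e (b, 1)) ∨
      (w = (fx, gy * c * fy) ∧ p = e (1, gy * c) * f - e (a, 1) * g * e (b, c * fy)))) ∨
  -- 1.2 Y-inclusion only
  (∃ (a : FreeMonoid X) (c d : FreeMonoid Y), fy = c * gy * d ∧
     ((w = (fx * a * gx, fy) ∧ p = f * e (a * gx, 1) - e (fx * a, c) * g * e (1, d)) ∨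
      (w = (gx * a * fx, fy) ∧ p = e (gx * a, 1) * f - e (1, c) * g * e (a * fx, d)))) ∨
  -- 1.3 X,Y-inclusion
  (∃ (a b : FreeMonoid X) (c d : FreeMonoid Y), fx = a * gx * b ∧ fy = c * gy * d ∧
     w = (fx, fy) ∧ p = f - e (a, c) * g * e (b, d)) ∨
  -- 1.4 X,Y-skew-inclusion
  (∃ (a b : FreeMonoid X) (c d : FreeMonoid Y), fx = a * gx * b ∧ gy = c * fy * d ∧
     w = (fx, gy) ∧ p = e (1, c) * f * e (1, d) - e (a, 1) * g * e (b, 1)) ∨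
  -- 2.1 X-intersection only
  (∃ (a b : FreeMonoid X) (c : FreeMonoid Y), fx * a = b * gx ∧
     (fx * a).length < fx.length + gx.length ∧
     ((w = (fx * a, fy * c * gy) ∧ p = f * e (a, c * gy) - e (b, fy * c) * g) ∨
      (w = (fx * a, gy * c * fy) ∧
        p = e (1, gy * c) * f * e (a, 1) - e (b, 1) * g * e (1, c * fy)))) ∨
  -- 2.2 Y-intersection only
  (∃ (a : FreeMonoid X) (c d : FreeMonoid Y), fy * c = d * gy ∧
     (fy * c).length < fy.length + gy.length ∧
     ((w = (fx * a * gx, fy * c) ∧ p = f * e (a * gx, c) - e (fx * a, d) * g) ∨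
      (w = (gx * a * fx, fy * c) ∧
        p = e (gx * a, 1) * f * e (1, c) - e (1, d) * g * e (a * fx, 1)))) ∨
  -- 2.3 X,Y-intersection
  (∃ (a b : FreeMonoid X) (c d : FreeMonoid Y), fx * a = b * gx ∧ fy * c = d * gy ∧
     (fx * a).length < fx.length + gx.length ∧ (fy * c).length < fy.length + gy.length ∧
     w = (fx * a, fy * c) ∧ p = f * e (a, c) - e (b, d) * g) ∨
  -- 2.4 X,Y-skew-intersection
  (∃ (a b : FreeMonoid X) (c d : FreeMonoid Y), fx * a = b * gx ∧ c * fy = gy * d ∧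
     (fx * a).length < fx.length + gx.length ∧ (c * fy).length < fy.length + gy.length ∧
     w = (fx * a, c * fy) ∧ p = e (1, c) * f * e (a, 1) - e (b, 1) * g * e (1, d)) ∨
  -- 3.1 X-inclusion and Y-intersection
  (∃ (a b : FreeMonoid X) (c d : FreeMonoid Y), fx = a * gx * b ∧
     ((fy * c = d * gy ∧ (fy * c).length < fy.length + gy.length ∧
        w = (fx, fy * c) ∧ p = f * e (1, c) - e (a, d) * g * e (b, 1)) ∨
      (c * fy = gy * d ∧ (c * fy).length < fy.length + gy.length ∧
        w = (fx, c * fy) ∧ p = e (1, c) * f - e (a, 1) * g * e (b, d)))) ∨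
  -- 3.2 X-intersection and Y-inclusion
  (∃ (a b : FreeMonoid X) (c d : FreeMonoid Y), fx * a = b * gx ∧
     (fx * a).length < fx.length + gx.length ∧
     ((fy = c * gy * d ∧ w = (fx * a, fy) ∧ p = f * e (a, 1) - e (b, c) * g * e (1, d)) ∨
      (gy = c * fy * d ∧ w = (fx * a, gy) ∧ p = e (1, c) * f * e (a, d) - e (b, 1) * g)))

/-- Gröbner–Shirshov basis in `k⟨X⟩ ⊗ k⟨Y⟩`: a set of monic polynomials
all of whose compositions are trivial. -/
def IsGSB {k X Y : Type*} [Ring k] (lt : NW X Y → NW X Y → Prop)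
    (S : Set (MonoidAlgebra k (NW X Y))) : Prop :=
  (∀ s ∈ S, MonicR lt s) ∧
  ∀ f ∈ S, ∀ g ∈ S, ∀ (mf mg : NW X Y) (p : MonoidAlgebra k (NW X Y)) (w : NW X Y),
    IsLeadR lt f mf → IsLeadR lt g mg → IsComp f g mf mg p w → TrivModR lt S w p

/-- the abelianization map `γ : X* → [X]`, with `[X]` the free commutative monoid
on `X` realized as `Multiplicative (Multiset X)`. -/
def gam {X : Type*} (u : FreeMonoid X) : Multiplicative (Multiset X) :=
  Multiplicative.ofAdd (↑u.toList : Multiset X)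

/-- the order on `X*` lifted from a monomial order on `[X]`:
`u > v` iff `γ(u) > γ(v)`, or `γ(u) = γ(v)` and `u >_lex v`. -/
def liftOrd {X : Type*} [LinearOrder X]
    (ltC : Multiplicative (Multiset X) → Multiplicative (Multiset X) → Prop)
    (u v : FreeMonoid X) : Prop :=
  ltC (gam u) (gam v) ∨ (gam u = gam v ∧ List.Lex (· < ·) u.toList v.toList)

/-- `δ` on monomials: the weakly increasing word representing a commutative monomial. -/
noncomputable def dword {X : Type*} [LinearOrder X] (m : Multiplicative (Multiset X)) :
    FreeMonoid X :=
  FreeMonoid.ofList (Multiset.sort (Multiplicative.toAdd m) (· ≤ ·))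

/-- the lexicographic splitting `δ : k[X] → k⟨X⟩`. -/
noncomputable def deltaMap {k X : Type*} [Semiring k] [LinearOrder X]
    (f : MonoidAlgebra k (Multiplicative (Multiset X))) :
    MonoidAlgebra k (FreeMonoid X) :=
  MonoidAlgebra.mapDomain dword f

/-- the set `S₁ = {xᵢxⱼ - xⱼxᵢ : xᵢ > xⱼ}` of commutators in `k⟨X⟩`. -/
noncomputable def commSet (k X : Type*) [Ring k] [LinearOrder X] :
    Set (MonoidAlgebra k (FreeMonoid X)) :=
  {p | ∃ i j : X, j < i ∧
    p = mono k (FreeMonoid.of i * FreeMonoid.of j) - mono k (FreeMonoid.of j * FreeMonoid.of i)}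

/-- `U(m)`: commutative monomials in the variables strictly between the least and the
greatest variable occurring in `m`. -/
def UU {X : Type*} [LinearOrder X] (m : Multiplicative (Multiset X)) :
    Set (Multiplicative (Multiset X)) :=
  {u | ∀ y ∈ Multiplicative.toAdd u,
     (∃ z ∈ Multiplicative.toAdd m, z < y) ∧ (∃ z ∈ Multiplicative.toAdd m, y < z)}

/-- Normal words of `k[X] ⊗ k⟨Y⟩`: the monoid `[X]Y*`. -/
abbrev CW (X Y : Type*) := Multiplicative (Multiset X) × FreeMonoid Y

/-- the order on `[X]Y*`: compare the `Y`-part first, then the `[X]`-part. -/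
def cwOrd {X Y : Type*}
    (ltC : Multiplicative (Multiset X) → Multiplicative (Multiset X) → Prop)
    (ltY : FreeMonoid Y → FreeMonoid Y → Prop) (u v : CW X Y) : Prop :=
  ltY u.2 v.2 ∨ (u.2 = v.2 ∧ ltC u.1 v.1)

/-- the order on `X*Y*` lifted from the order on `[X]Y*`, breaking ties by `lex`
on the `X`-component. -/
def liftNW {X Y : Type*} [LinearOrder X]
    (ltC : Multiplicative (Multiset X) → Multiplicative (Multiset X) → Prop)
    (ltY : FreeMonoid Y → FreeMonoid Y → Prop) (u v : NW X Y) : Prop :=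
  cwOrd ltC ltY (gam u.1, u.2) (gam v.1, v.2) ∨
    ((gam u.1 = gam v.1 ∧ u.2 = v.2) ∧ List.Lex (· < ·) u.1.toList v.1.toList)

/-- `δ : k[X] ⊗ k⟨Y⟩ → k⟨X⟩ ⊗ k⟨Y⟩`, the lexicographic splitting extended by the
identity on `Y`-words. -/
noncomputable def deltaNW {k X Y : Type*} [Semiring k] [LinearOrder X]
    (f : MonoidAlgebra k (CW X Y)) : MonoidAlgebra k (NW X Y) :=
  MonoidAlgebra.mapDomain (fun m : CW X Y => ((dword m.1, m.2) : NW X Y)) f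

/-- Mikhalev–Zolotykh compositions in `k[X] ⊗ k⟨Y⟩`: inclusion `C₁`, overlap `C₂`
and external `C₃` compositions, where `mf`, `mg` are the leading words of `f`, `g`,
and `L = lcm(mf^X, mg^X)`. -/
def MZComp {k X Y : Type*} [Ring k] [DecidableEq X]
    (ltC : Multiplicative (Multiset X) → Multiplicative (Multiset X) → Prop)
    (f g : MonoidAlgebra k (CW X Y)) (mf mg : CW X Y)
    (p : MonoidAlgebra k (CW X Y)) (w : CW X Y) : Prop :=
  let e : CW X Y → MonoidAlgebra k (CW X Y) := fun m => mono k m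
  let fX := Multiplicative.toAdd mf.1; let gX := Multiplicative.toAdd mg.1
  let L : Multiset X := fX ∪ gX
  let Lf : Multiplicative (Multiset X) := Multiplicative.ofAdd (L - fX)
  let Lg : Multiplicative (Multiset X) := Multiplicative.ofAdd (L - gX)
  -- C₁ : inclusion
  (∃ c d : FreeMonoid Y, mf.2 = c * mg.2 * d ∧
     (mf.2 = mg.2 → (mg.1 = mf.1 ∨ ltC mg.1 mf.1)) ∧ (mg.2 = 1 → c = 1) ∧
     w = (Multiplicative.ofAdd L, mf.2) ∧
     p = e (Lf, 1) * f - e (Lg, c) * g * e (1, d)) ∨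
  -- C₂ : overlap
  (∃ c d c₀ : FreeMonoid Y, c₀ ≠ 1 ∧ mf.2 = c * c₀ ∧ mg.2 = c₀ * d ∧
     w = (Multiplicative.ofAdd L, mf.2 * d) ∧
     p = e (Lf, 1) * f * e (1, d) - e (Lg, c) * g) ∨
  -- C₃ : external
  (∃ c₀ : FreeMonoid Y, fX ∩ gX ≠ 0 ∧ mf.2 ≠ 1 ∧ mg.2 ≠ 1 ∧
     w = (Multiplicative.ofAdd L, mf.2 * c₀ * mg.2) ∧
     p = e (Lf, 1) * f * e (1, c₀ * mg.2) - e (Lg, mf.2 * c₀) * g)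

/-- Gröbner–Shirshov basis in `k[X] ⊗ k⟨Y⟩` in the sense of Mikhalev–Zolotykh. -/
def MZGSB {k X Y : Type*} [Ring k] [DecidableEq X]
    (ltC : Multiplicative (Multiset X) → Multiplicative (Multiset X) → Prop)
    (ltY : FreeMonoid Y → FreeMonoid Y → Prop)
    (S : Set (MonoidAlgebra k (CW X Y))) : Prop :=
  (∀ s ∈ S, MonicR (cwOrd ltC ltY) s) ∧
  ∀ f ∈ S, ∀ g ∈ S, ∀ (mf mg : CW X Y) (p : MonoidAlgebra k (CW X Y)) (w : CW X Y),
    IsLeadR (cwOrd ltC ltY) f mf → IsLeadR (cwOrd ltC ltY) g mg →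
    MZComp ltC f g mf mg p w → TrivModR (cwOrd ltC ltY) S w p

/-! Write `f̄` for the leading word of `f`. Every composition of `f, g ∈ S₁ ∪ S₂` has the form
`A₁ f B₁ - A₂ g B₂` with `A₁ f̄ B₁ = A₂ ḡ B₂ = w`, so it suffices that every such ambiguity is
trivial modulo `(S₁ ∪ S₂, w)`. If `f, g ∈ S₁`, the `Y`-parts of the two multipliers agree and the
ambiguity is the image of an ambiguity in `k⟨X⟩`; there it is trivial because the two
occurrences of leading words are disjoint, or form an intersection or an inclusion composition
of `S₁`. The case `f, g ∈ S₂` is symmetric. If `f ∈ S₁` and `g ∈ S₂`, the leading words lie in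
commuting factors of `X*Y*` and never overlap, and `f ḡ - f̄ g = (f - f̄) g - f (g - ḡ)` is
trivial because both lower parts only produce smaller words. -/

open MonoidAlgebra

section MonoidAlgebra

variable {k M N : Type*}

theorem mono_mul [Semiring k] [Monoid M] (a b : M) : mono k (a * b) = mono k a * mono k b :=
  map_mul (of k M) a b

theorem mono_one [Semiring k] [Monoid M] : mono k (1 : M) = 1 :=
  map_one (of k M)

theorem mono_mul_mapDomain_mul_mono [Semiring k] [Monoid M] [Monoid N] (f : M → N) (a b : N)
    (s : MonoidAlgebra k M) :
    mono k a * mapDomain f s * mono k b = mapDomain (fun x => a * f x * b) s := by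
  induction s using MonoidAlgebra.induction_linear with
  | zero => simp
  | add s t hs ht => rw [mapDomain_add, mul_add, add_mul, hs, ht, mapDomain_add]
  | single x c => simp [mono, single_mul_single]

theorem mono_mul_mul_mono [Semiring k] [Monoid M] (a b : M) (s : MonoidAlgebra k M) :
    mono k a * s * mono k b = mapDomain (fun x => a * x * b) s := by
  simpa [mapDomain] using mono_mul_mapDomain_mul_mono (k := k) id a b s

theorem sub_mono_mem_span [Ring k] [Monoid M] {s : MonoidAlgebra k M} {m : M}
    (hm : m ∈ s.coeff.support) (h1 : s.coeff m = 1) :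
    s - mono k m ∈ Submodule.span k (mono k '' {u | u ∈ s.coeff.support ∧ u ≠ m}) := by
  classical
  have hsum : s = ∑ u ∈ s.coeff.support, s.coeff u • mono k u := by
    conv_lhs => rw [← sum_coeff_single s, Finsupp.sum]
    exact Finset.sum_congr rfl fun u _ => by simp [mono]
  have herase : s - mono k m = ∑ u ∈ s.coeff.support.erase m, s.coeff u • mono k u := by
    conv_lhs => rw [hsum, ← Finset.add_sum_erase _ _ hm, h1, one_smul, add_sub_cancel_left]
  rw [herase]
  refine Submodule.sum_mem _ fun u hu => Submodule.smul_mem _ _ (Submodule.subset_span ?_)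
  exact ⟨u, ⟨Finset.mem_of_mem_erase hu, Finset.ne_of_mem_erase hu⟩, rfl⟩

theorem MonoidAlgebra.mapDomain_sub [Ring k] (f : M → N) (x y : MonoidAlgebra k M) :
    mapDomain f (x - y) = mapDomain f x - mapDomain f y := by
  ext; simp [Finsupp.mapDomain_sub]

theorem mono_mul_mapDomain_inl_mul_mono {M₁ M₂ : Type*} [Semiring k] [Monoid M₁] [Monoid M₂]
    (A B : M₁ × M₂) (f : MonoidAlgebra k M₁) :
    mono k A * mapDomain (fun u => (u, (1 : M₂))) f * mono k B
      = mapDomain (fun u => (u, A.2 * B.2)) (mono k A.1 * f * mono k B.1) := by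
  rw [mono_mul_mapDomain_mul_mono, mono_mul_mul_mono]
  ext1
  rw [coeff_mapDomain, coeff_mapDomain, coeff_mapDomain, ← Finsupp.mapDomain_comp]
  congr 1
  funext u
  simp [Prod.ext_iff]

theorem mono_mul_mapDomain_inr_mul_mono {M₁ M₂ : Type*} [Semiring k] [Monoid M₁] [Monoid M₂]
    (A B : M₁ × M₂) (f : MonoidAlgebra k M₂) :
    mono k A * mapDomain (fun v => ((1 : M₁), v)) f * mono k B
      = mapDomain (fun v => (A.1 * B.1, v)) (mono k A.2 * f * mono k B.2) := by
  rw [mono_mul_mapDomain_mul_mono, mono_mul_mul_mono]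
  ext1
  rw [coeff_mapDomain, coeff_mapDomain, coeff_mapDomain, ← Finsupp.mapDomain_comp]
  congr 1
  funext u
  simp [Prod.ext_iff]

end MonoidAlgebra

theorem Submodule.apply_mem_span_of_mapsTo {R A B : Type*} [Semiring R] [AddCommMonoid A]
    [AddCommMonoid B] [Module R A] [Module R B] (L : A →ₗ[R] B) {s : Set A} {t : Set B}
    (hst : Set.MapsTo L s t) {x : A} (hx : x ∈ Submodule.span R s) :
    L x ∈ Submodule.span R t :=
  Submodule.span_mono hst.image_subset (Submodule.apply_mem_span_image_of_mem_span L hx)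

section LeadingWords

variable {k M N : Type*} [Semiring k] {ltM : M → M → Prop} {ltN : N → N → Prop} {ι : M → N}

theorem IsLeadR.mapDomain (hι : Function.Injective ι) (hlt : ∀ u v, ltM u v → ltN (ι u) (ι v))
    {f : MonoidAlgebra k M} {m : M} (h : IsLeadR ltM f m) :
    IsLeadR ltN (MonoidAlgebra.mapDomain ι f) (ι m) := by
  classical
  rw [IsLeadR, coeff_mapDomain, Finsupp.mapDomain_support_of_injective hι]
  refine ⟨Finset.mem_image_of_mem _ h.1, ?_⟩
  intro w hw hne
  obtain ⟨u, hu, rfl⟩ := Finset.mem_image.1 hw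
  exact hlt _ _ (h.2 u hu (ne_of_apply_ne ι hne))

theorem IsLeadR.exists_of_mapDomain (hι : Function.Injective ι)
    (hlt : ∀ u v, ltN (ι u) (ι v) → ltM u v) {f : MonoidAlgebra k M} {w : N}
    (h : IsLeadR ltN (MonoidAlgebra.mapDomain ι f) w) : ∃ m, ι m = w ∧ IsLeadR ltM f m := by
  classical
  rw [IsLeadR, coeff_mapDomain, Finsupp.mapDomain_support_of_injective hι] at h
  obtain ⟨m, hm, rfl⟩ := Finset.mem_image.1 h.1
  exact ⟨m, rfl, hm, fun u hu hne => hlt _ _ (h.2 _ (Finset.mem_image_of_mem _ hu) (hι.ne hne))⟩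

theorem MonicR.mapDomain (hι : Function.Injective ι) (hlt : ∀ u v, ltM u v → ltN (ι u) (ι v))
    {s : MonoidAlgebra k M} (hs : MonicR ltM s) : MonicR ltN (MonoidAlgebra.mapDomain ι s) := by
  obtain ⟨m, hm, h1⟩ := hs
  exact ⟨ι m, hm.mapDomain hι hlt, by rw [coeff_mapDomain, Finsupp.mapDomain_apply hι, h1]⟩

theorem IsLeadR.unique {lt : M → M → Prop} [Std.Asymm lt] {f : MonoidAlgebra k M} {m m' : M}
    (h : IsLeadR lt f m) (h' : IsLeadR lt f m') : m = m' := by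
  by_contra hne
  exact asymm (h'.2 m h.1 hne) (h.2 m' h'.1 (Ne.symm hne))

theorem MonicR.coeff_eq_one {lt : M → M → Prop} [Std.Asymm lt] {s : MonoidAlgebra k M} {m : M}
    (hs : MonicR lt s) (hm : IsLeadR lt s m) : s.coeff m = 1 := by
  obtain ⟨m', hm', h1⟩ := hs
  rwa [hm.unique hm']

end LeadingWords

section Triviality

variable {k M N : Type*} [Monoid M] [Monoid N] {lt : M → M → Prop}

def IsMulCompatible (lt : M → M → Prop) : Prop :=
  ∀ ⦃u v : M⦄ (a b : M), lt u v → lt (a * u * b) (a * v * b)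

def smallMultiples [Semiring k] (lt : M → M → Prop) (S : Set (MonoidAlgebra k M)) (w : M) :
    Set (MonoidAlgebra k M) :=
  {h | ∃ a b m, ∃ s ∈ S, IsLeadR lt s m ∧ lt (a * m * b) w ∧ mono k a * s * mono k b = h}

theorem trivModR_iff_mem_span [Semiring k] {S : Set (MonoidAlgebra k M)} {w : M}
    {h : MonoidAlgebra k M} :
    TrivModR lt S w h ↔ h ∈ Submodule.span k (smallMultiples lt S w) := by
  rw [Submodule.mem_span_set']
  constructor
  · rintro ⟨n, α, a, b, s, hS, rfl, hlt⟩
    refine ⟨n, α, fun i => ⟨_, ?_⟩, rfl⟩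
    obtain ⟨m, hm, hm'⟩ := hlt i
    exact ⟨a i, b i, m, s i, hS i, hm, hm', rfl⟩
  · rintro ⟨n, α, g, rfl⟩
    choose a b m s hS hm hlt hg using fun i => (g i).2
    exact ⟨n, α, a, b, s, hS, by simp only [hg], fun i => ⟨m i, hm i, hlt i⟩⟩

theorem TrivModR.map [Semiring k] {ltM : M → M → Prop} {ltN : N → N → Prop}
    {S : Set (MonoidAlgebra k M)} {T : Set (MonoidAlgebra k N)} {w : M} {w' : N}
    (L : MonoidAlgebra k M →ₗ[k] MonoidAlgebra k N)
    (hL : Set.MapsTo L (smallMultiples ltM S w) (smallMultiples ltN T w'))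
    {h : MonoidAlgebra k M} (hh : TrivModR ltM S w h) : TrivModR ltN T w' (L h) := by
  rw [trivModR_iff_mem_span] at hh ⊢
  exact Submodule.apply_mem_span_of_mapsTo L hL hh

theorem TrivModR.neg [Ring k] {S : Set (MonoidAlgebra k M)} {w : M}
    {h : MonoidAlgebra k M} (hh : TrivModR lt S w h) : TrivModR lt S w (-h) := by
  rw [trivModR_iff_mem_span] at hh ⊢
  exact neg_mem hh

theorem TrivModR.mono_mul_mul_mono [CommSemiring k] {S : Set (MonoidAlgebra k M)}
    (hlt : IsMulCompatible lt) {w : M} {h : MonoidAlgebra k M} (hh : TrivModR lt S w h) (c d : M) :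
    TrivModR lt S (c * w * d) (mono k c * h * mono k d) := by
  have hL : Set.MapsTo (LinearMap.mulLeft k (mono k c) ∘ₗ LinearMap.mulRight k (mono k d))
      (smallMultiples lt S w) (smallMultiples lt S (c * w * d)) := by
    rintro _ ⟨a, b, m, s, hs, hm, hmw, rfl⟩
    refine ⟨c * a, b * d, m, s, hs, hm, by simpa only [mul_assoc] using hlt c d hmw, ?_⟩
    simp only [LinearMap.comp_apply, LinearMap.mulLeft_apply, LinearMap.mulRight_apply, mono_mul,
      mul_assoc]
  simpa only [LinearMap.comp_apply, LinearMap.mulLeft_apply, LinearMap.mulRight_apply,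
    mul_assoc] using hh.map _ hL

theorem trivModR_sub_of_disjoint [CommRing k] {S : Set (MonoidAlgebra k M)}
    (hlt : IsMulCompatible lt) {s t : MonoidAlgebra k M} {m n : M}
    (hs : s ∈ S) (ht : t ∈ S) (hm : IsLeadR lt s m) (hn : IsLeadR lt t n)
    (hs1 : s.coeff m = 1) (ht1 : t.coeff n = 1) (u : M) :
    TrivModR lt S (m * u * n) (s * mono k (u * n) - mono k (m * u) * t) := by
  have hsplit : s * mono k (u * n) - mono k (m * u) * t
      = (s - mono k m) * (mono k u * t) - (s * mono k u) * (t - mono k n) := by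
    rw [mono_mul, mono_mul]; noncomm_ring
  rw [hsplit, trivModR_iff_mem_span]
  refine sub_mem ?_ ?_
  · refine Submodule.apply_mem_span_of_mapsTo (LinearMap.mulRight k (mono k u * t)) ?_
      (sub_mono_mem_span hm.1 hs1)
    rintro _ ⟨v, ⟨hv, hvm⟩, rfl⟩
    refine ⟨v * u, 1, n, t, ht, hn, ?_, ?_⟩
    · simpa only [one_mul, mul_one, mul_assoc] using hlt 1 (u * n) (hm.2 v hv hvm)
    · simp only [LinearMap.mulRight_apply, mono_mul, mono_one, mul_one, mul_assoc]
  · refine Submodule.apply_mem_span_of_mapsTo (LinearMap.mulLeft k (s * mono k u)) ?_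
      (sub_mono_mem_span hn.1 ht1)
    rintro _ ⟨v, ⟨hv, hvn⟩, rfl⟩
    refine ⟨1, u * v, m, s, hs, hm, ?_, ?_⟩
    · simpa only [one_mul, mul_one, mul_assoc] using hlt (m * u) 1 (hn.2 v hv hvn)
    · simp only [LinearMap.mulLeft_apply, mono_mul, mono_one, one_mul, mul_assoc]

def AmbiguitiesTrivial [Ring k] (lt : M → M → Prop) (S : Set (MonoidAlgebra k M)) : Prop :=
  ∀ ⦃s t : MonoidAlgebra k M⦄ ⦃m n : M⦄, s ∈ S → t ∈ S → IsLeadR lt s m → IsLeadR lt t n →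
    ∀ a₁ b₁ a₂ b₂ : M, a₁ * m * b₁ = a₂ * n * b₂ →
      TrivModR lt S (a₁ * m * b₁) (mono k a₁ * s * mono k b₁ - mono k a₂ * t * mono k b₂)

end Triviality

section Words

theorem FreeMonoid.exists_eq_mul_of_mul_eq_mul {Z : Type*} {a b x y : FreeMonoid Z}
    (h : a * x = b * y) (hl : a.length ≤ b.length) : ∃ c, b = a * c ∧ x = c * y := by
  have h' : a.toList ++ x.toList = b.toList ++ y.toList := by
    rw [← FreeMonoid.toList_mul, ← FreeMonoid.toList_mul, h]
  obtain ⟨c, hc⟩ : a.toList <+: b.toList :=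
    List.prefix_of_prefix_length_le (h' ▸ List.prefix_append _ _) (List.prefix_append _ _) hl
  refine ⟨FreeMonoid.ofList c, FreeMonoid.toList.injective hc.symm, ?_⟩
  apply FreeMonoid.toList.injective
  rw [← hc, List.append_assoc] at h'
  exact List.append_cancel_left h'

variable {A : Type*}

theorem List.Lex.append_right_of_length_eq {r : A → A → Prop} {u v : List A} (h : List.Lex r u v)
    (hlen : u.length = v.length) (w : List A) : List.Lex r (u ++ w) (v ++ w) := by
  induction h with
  | nil => simp at hlen
  | rel h => exact List.Lex.rel h
  | cons _ ih => exact List.Lex.cons (ih (by simpa using hlen))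

theorem degLex_isMulCompatible (r : A → A → Prop) : IsMulCompatible (degLex r) := by
  rintro u v a b (h | ⟨hlen, hlex⟩)
  · left; simp only [FreeMonoid.length_mul]; omega
  · right
    refine ⟨by simp only [FreeMonoid.length_mul, hlen], ?_⟩
    simp only [FreeMonoid.toList_mul, List.append_assoc]
    exact List.Lex.append_left r (hlex.append_right_of_length_eq hlen _) _

instance degLex_isAsymm [LinearOrder A] : Std.Asymm (degLex ((· < ·) : A → A → Prop)) where
  asymm u v := by
    rintro (h | ⟨hl, h⟩) (h' | ⟨hl', h'⟩)
    all_goals first | omega | exact asymm h h'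

end Words

theorem FIsGSB.ambiguitiesTrivial {k Z : Type*} [CommRing k]
    {lt : FreeMonoid Z → FreeMonoid Z → Prop} [Std.Asymm lt] (hlt : IsMulCompatible lt)
    {S : Set (MonoidAlgebra k (FreeMonoid Z))} (hS : FIsGSB lt S) : AmbiguitiesTrivial lt S := by
  intro s t m n hs ht hm hn a₁ b₁ a₂ b₂ heq
  wlog hle : a₁.length ≤ a₂.length generalizing s t m n a₁ b₁ a₂ b₂
  · have := (this ht hs hn hm a₂ b₂ a₁ b₁ heq.symm (by omega)).neg
    rwa [neg_sub, ← heq] at this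
  obtain ⟨U, rfl, hU⟩ := FreeMonoid.exists_eq_mul_of_mul_eq_mul
    (show a₁ * (m * b₁) = a₂ * (n * b₂) by simpa only [mul_assoc] using heq) hle
  -- with `a₂ = a₁ U`, the occurrences of `m` and `n` are disjoint, overlap (an intersection
  -- composition), or `n` lies inside `m` (an inclusion composition)
  rcases le_or_gt m.length U.length with hmU | hUm
  · obtain ⟨E, rfl, rfl⟩ := FreeMonoid.exists_eq_mul_of_mul_eq_mul hU hmU
    have := (trivModR_sub_of_disjoint hlt hs ht hm hn (hS.1 s hs |>.coeff_eq_one hm)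
      (hS.1 t ht |>.coeff_eq_one hn) E).mono_mul_mul_mono hlt a₁ b₂
    simpa only [mono_mul, mul_sub, sub_mul, mul_assoc] using this
  rcases le_or_gt m.length (U * n).length with hmUn | hUnm
  · obtain ⟨B, hB, rfl⟩ := FreeMonoid.exists_eq_mul_of_mul_eq_mul
      (show m * b₁ = U * n * b₂ by rw [hU, mul_assoc]) hmUn
    have hlen : (m * B).length < m.length + n.length := by
      rw [← hB]; simp only [FreeMonoid.length_mul] at hUm ⊢; omega
    have := ((hS.2 s hs t ht m n hm hn).1 U B hB.symm (hB ▸ hlen)).mono_mul_mul_mono hlt a₁ b₂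
    simpa only [mono_mul, mul_sub, sub_mul, mul_assoc] using this
  · obtain ⟨B, rfl, rfl⟩ := FreeMonoid.exists_eq_mul_of_mul_eq_mul
      (show U * n * b₂ = m * b₁ by rw [hU, mul_assoc]) hUnm.le
    have := ((hS.2 s hs t ht _ n hm hn).2 U B rfl).mono_mul_mul_mono hlt a₁ b₁
    simpa only [mono_mul, mul_sub, sub_mul, mul_assoc] using this

section Tensor

variable {k X Y : Type*} [CommRing k] {ltX : FreeMonoid X → FreeMonoid X → Prop}
  {ltY : FreeMonoid Y → FreeMonoid Y → Prop} {S₁ : Set (MonoidAlgebra k (FreeMonoid X))}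
  {S₂ : Set (MonoidAlgebra k (FreeMonoid Y))} {T : Set (MonoidAlgebra k (NW X Y))}

local notation "ιX" => MonoidAlgebra.mapDomain (fun u : FreeMonoid X => ((u, 1) : NW X Y))
local notation "ιY" => MonoidAlgebra.mapDomain (fun v : FreeMonoid Y => ((1, v) : NW X Y))

theorem lexNW_inl_iff [Std.Asymm ltY] (u v : FreeMonoid X) :
    lexNW ltX ltY ((u, 1) : NW X Y) (v, 1) ↔ ltX u v :=
  ⟨by rintro (h | ⟨-, h⟩); exacts [h, (asymm h h).elim], Or.inl⟩

theorem lexNW_inr_iff [Std.Asymm ltX] (u v : FreeMonoid Y) :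
    lexNW ltX ltY ((1, u) : NW X Y) (1, v) ↔ ltY u v :=
  ⟨by rintro (h | ⟨-, h⟩); exacts [(asymm h h).elim, h], fun h => Or.inr ⟨rfl, h⟩⟩

theorem lexNW_isMulCompatible (hX : IsMulCompatible ltX) (hY : IsMulCompatible ltY) :
    IsMulCompatible (lexNW ltX ltY) := by
  rintro u v a b (h | ⟨h₁, h₂⟩)
  · exact Or.inl (hX _ _ h)
  · exact Or.inr ⟨by simp only [Prod.fst_mul, h₁], hY _ _ h₂⟩

theorem IsLeadR.mapDomain_inl {s : MonoidAlgebra k (FreeMonoid X)} {m : FreeMonoid X}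
    (h : IsLeadR ltX s m) : IsLeadR (lexNW ltX ltY) (ιX s) (m, 1) :=
  h.mapDomain (Prod.mk_left_injective 1) fun _ _ => Or.inl

theorem IsLeadR.mapDomain_inr {s : MonoidAlgebra k (FreeMonoid Y)} {m : FreeMonoid Y}
    (h : IsLeadR ltY s m) : IsLeadR (lexNW ltX ltY) (ιY s) (1, m) :=
  h.mapDomain (Prod.mk_right_injective 1) fun _ _ h => Or.inr ⟨rfl, h⟩

theorem IsLeadR.exists_of_mapDomain_inl [Std.Asymm ltY] {s : MonoidAlgebra k (FreeMonoid X)}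
    {w : NW X Y} (h : IsLeadR (lexNW ltX ltY) (ιX s) w) : ∃ m, (m, 1) = w ∧ IsLeadR ltX s m :=
  h.exists_of_mapDomain (Prod.mk_left_injective 1) fun u v => (lexNW_inl_iff u v).1

theorem IsLeadR.exists_of_mapDomain_inr [Std.Asymm ltX] {s : MonoidAlgebra k (FreeMonoid Y)}
    {w : NW X Y} (h : IsLeadR (lexNW ltX ltY) (ιY s) w) : ∃ m, (1, m) = w ∧ IsLeadR ltY s m :=
  h.exists_of_mapDomain (Prod.mk_right_injective 1) fun u v => (lexNW_inr_iff u v).1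

theorem TrivModR.mapDomain_inl (hT : Set.MapsTo ιX S₁ T) {w : FreeMonoid X}
    {h : MonoidAlgebra k (FreeMonoid X)} (hh : TrivModR ltX S₁ w h) (y : FreeMonoid Y) :
    TrivModR (lexNW ltX ltY) T (w, y) (mapDomain (fun u => ((u, y) : NW X Y)) h) := by
  refine hh.map (mapDomainLinearMap k k fun u => ((u, y) : NW X Y)) ?_
  rintro _ ⟨a, b, m, s, hs, hm, hlt, rfl⟩
  refine ⟨(a, y), (b, 1), (m, 1), _, hT hs, hm.mapDomain_inl, Or.inl hlt, ?_⟩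
  rw [mono_mul_mapDomain_inl_mul_mono, mul_one]
  rfl

theorem TrivModR.mapDomain_inr (hT : Set.MapsTo ιY S₂ T) {w : FreeMonoid Y}
    {h : MonoidAlgebra k (FreeMonoid Y)} (hh : TrivModR ltY S₂ w h) (x : FreeMonoid X) :
    TrivModR (lexNW ltX ltY) T (x, w) (mapDomain (fun v => ((x, v) : NW X Y)) h) := by
  refine hh.map (mapDomainLinearMap k k fun v => ((x, v) : NW X Y)) ?_
  rintro _ ⟨a, b, m, s, hs, hm, hlt, rfl⟩
  refine ⟨(x, a), (1, b), (1, m), _, hT hs, hm.mapDomain_inr, Or.inr ⟨by simp, hlt⟩, ?_⟩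
  rw [mono_mul_mapDomain_inr_mul_mono, mul_one]
  rfl

theorem AmbiguitiesTrivial.trivModR_inl_sub_inl (hS : AmbiguitiesTrivial ltX S₁)
    (hT : Set.MapsTo ιX S₁ T) {s t : MonoidAlgebra k (FreeMonoid X)} (hs : s ∈ S₁) (ht : t ∈ S₁)
    {m n : FreeMonoid X} (hm : IsLeadR ltX s m) (hn : IsLeadR ltX t n) (A₁ B₁ A₂ B₂ : NW X Y)
    (heq : A₁ * (m, 1) * B₁ = A₂ * (n, 1) * B₂) :
    TrivModR (lexNW ltX ltY) T (A₁ * (m, 1) * B₁)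
      (mono k A₁ * ιX s * mono k B₁ - mono k A₂ * ιX t * mono k B₂) := by
  obtain ⟨h₁, h₂⟩ := Prod.ext_iff.1 heq
  simp only [Prod.fst_mul, Prod.snd_mul, mul_one] at h₁ h₂
  have := (hS hs ht hm hn _ _ _ _ h₁).mapDomain_inl (ltY := ltY) hT (A₁.2 * B₁.2)
  rw [mono_mul_mapDomain_inl_mul_mono, mono_mul_mapDomain_inl_mul_mono, ← h₂, ← mapDomain_sub]
  convert this using 1
  ext <;> simp

theorem AmbiguitiesTrivial.trivModR_inr_sub_inr (hS : AmbiguitiesTrivial ltY S₂)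
    (hT : Set.MapsTo ιY S₂ T) {s t : MonoidAlgebra k (FreeMonoid Y)} (hs : s ∈ S₂) (ht : t ∈ S₂)
    {m n : FreeMonoid Y} (hm : IsLeadR ltY s m) (hn : IsLeadR ltY t n) (A₁ B₁ A₂ B₂ : NW X Y)
    (heq : A₁ * (1, m) * B₁ = A₂ * (1, n) * B₂) :
    TrivModR (lexNW ltX ltY) T (A₁ * (1, m) * B₁)
      (mono k A₁ * ιY s * mono k B₁ - mono k A₂ * ιY t * mono k B₂) := by
  obtain ⟨h₁, h₂⟩ := Prod.ext_iff.1 heq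
  simp only [Prod.fst_mul, Prod.snd_mul, mul_one] at h₁ h₂
  have := (hS hs ht hm hn _ _ _ _ h₂).mapDomain_inr (ltX := ltX) hT (A₁.1 * B₁.1)
  rw [mono_mul_mapDomain_inr_mul_mono, mono_mul_mapDomain_inr_mul_mono, ← h₁, ← mapDomain_sub]
  convert this using 1
  ext <;> simp

theorem trivModR_inl_sub_inr (hX : IsMulCompatible ltX) (hY : IsMulCompatible ltY)
    {s : MonoidAlgebra k (FreeMonoid X)} {t : MonoidAlgebra k (FreeMonoid Y)}
    (hs : ιX s ∈ T) (ht : ιY t ∈ T) {m : FreeMonoid X} {n : FreeMonoid Y}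
    (hm : IsLeadR ltX s m) (hn : IsLeadR ltY t n) (hs1 : s.coeff m = 1) (ht1 : t.coeff n = 1)
    (A₁ B₁ A₂ B₂ : NW X Y)
    (heq : A₁ * (m, 1) * B₁ = A₂ * (1, n) * B₂) :
    TrivModR (lexNW ltX ltY) T (A₁ * (m, 1) * B₁)
      (mono k A₁ * ιX s * mono k B₁ - mono k A₂ * ιY t * mono k B₂) := by
  obtain ⟨h₁, h₂⟩ := Prod.ext_iff.1 heq
  simp only [Prod.fst_mul, Prod.snd_mul, one_mul, mul_assoc] at h₁ h₂
  -- `(m, 1)` and `(1, n)` commute, so `w = (A₁.1, A₂.2) (m, 1) (1, n) (B₁.1, B₂.2)` is a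
  -- disjoint overlap
  have := (trivModR_sub_of_disjoint (lexNW_isMulCompatible hX hY) hs ht
    hm.mapDomain_inl hn.mapDomain_inr
    (by rwa [coeff_mapDomain, Finsupp.mapDomain_apply (Prod.mk_left_injective 1)])
    (by rwa [coeff_mapDomain, Finsupp.mapDomain_apply (Prod.mk_right_injective 1)])
    1).mono_mul_mul_mono (lexNW_isMulCompatible hX hY) (A₁.1, A₂.2) (B₁.1, B₂.2)
  simp only [mul_one, one_mul] at this
  have e₁ : mono k A₁ * ιX s * mono k B₁
      = mono k (A₁.1, A₂.2) * (ιX s * mono k (1, n)) * mono k (B₁.1, B₂.2) := by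
    rw [← mul_assoc, mul_assoc _ (mono k _) (mono k _), ← mono_mul,
      mono_mul_mapDomain_inl_mul_mono, mono_mul_mapDomain_inl_mul_mono]
    simp [h₂, mul_assoc]
  have e₂ : mono k A₂ * ιY t * mono k B₂
      = mono k (A₁.1, A₂.2) * (mono k (m, 1) * ιY t) * mono k (B₁.1, B₂.2) := by
    rw [← mul_assoc (mono k _) (mono k _), ← mono_mul,
      mono_mul_mapDomain_inr_mul_mono, mono_mul_mapDomain_inr_mul_mono]
    simp [h₁, mul_assoc]
  rw [e₁, e₂, ← sub_mul, ← mul_sub]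
  convert this using 1
  simp [Prod.ext_iff, h₁, h₂, mul_assoc]

theorem monicR_of_mem_image_union (h₁ : ∀ s ∈ S₁, MonicR ltX s) (h₂ : ∀ s ∈ S₂, MonicR ltY s) :
    ∀ s ∈ ιX '' S₁ ∪ ιY '' S₂, MonicR (lexNW ltX ltY) s := by
  rintro _ (⟨s, hs, rfl⟩ | ⟨s, hs, rfl⟩)
  · exact (h₁ s hs).mapDomain (Prod.mk_left_injective 1) fun _ _ => Or.inl
  · exact (h₂ s hs).mapDomain (Prod.mk_right_injective 1) fun _ _ h => Or.inr ⟨rfl, h⟩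

theorem AmbiguitiesTrivial.image_union_image [Std.Asymm ltX] [Std.Asymm ltY]
    (hX : IsMulCompatible ltX) (hY : IsMulCompatible ltY)
    (hm₁ : ∀ s ∈ S₁, MonicR ltX s) (h₁ : AmbiguitiesTrivial ltX S₁)
    (hm₂ : ∀ s ∈ S₂, MonicR ltY s) (h₂ : AmbiguitiesTrivial ltY S₂) :
    AmbiguitiesTrivial (lexNW ltX ltY) (ιX '' S₁ ∪ ιY '' S₂) := by
  intro s t m n hs ht hmT hnT A₁ B₁ A₂ B₂ heq
  rcases hs with ⟨s, hs, rfl⟩ | ⟨s, hs, rfl⟩ <;> rcases ht with ⟨t, ht, rfl⟩ | ⟨t, ht, rfl⟩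
  · obtain ⟨m, rfl, hm⟩ := hmT.exists_of_mapDomain_inl
    obtain ⟨n, rfl, hn⟩ := hnT.exists_of_mapDomain_inl
    exact h₁.trivModR_inl_sub_inl (fun _ hs => Or.inl ⟨_, hs, rfl⟩) hs ht hm hn A₁ B₁ A₂ B₂ heq
  · obtain ⟨m, rfl, hm⟩ := hmT.exists_of_mapDomain_inl
    obtain ⟨n, rfl, hn⟩ := hnT.exists_of_mapDomain_inr
    exact trivModR_inl_sub_inr hX hY (Or.inl ⟨s, hs, rfl⟩) (Or.inr ⟨t, ht, rfl⟩) hm hn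
      ((hm₁ s hs).coeff_eq_one hm) ((hm₂ t ht).coeff_eq_one hn) A₁ B₁ A₂ B₂ heq
  · obtain ⟨m, rfl, hm⟩ := hmT.exists_of_mapDomain_inr
    obtain ⟨n, rfl, hn⟩ := hnT.exists_of_mapDomain_inl
    rw [← neg_sub, heq]
    exact (trivModR_inl_sub_inr hX hY (Or.inl ⟨t, ht, rfl⟩) (Or.inr ⟨s, hs, rfl⟩) hn hm
      ((hm₁ t ht).coeff_eq_one hn) ((hm₂ s hs).coeff_eq_one hm) A₂ B₂ A₁ B₁ heq.symm).neg
  · obtain ⟨m, rfl, hm⟩ := hmT.exists_of_mapDomain_inr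
    obtain ⟨n, rfl, hn⟩ := hnT.exists_of_mapDomain_inr
    exact h₂.trivModR_inr_sub_inr (fun _ hs => Or.inr ⟨_, hs, rfl⟩) hs ht hm hn A₁ B₁ A₂ B₂ heq

end Tensor

theorem IsComp.exists_eq_sub {k X Y : Type*} [Ring k] {f g : MonoidAlgebra k (NW X Y)}
    {mf mg : NW X Y} {p : MonoidAlgebra k (NW X Y)} {w : NW X Y} (h : IsComp f g mf mg p w) :
    ∃ A₁ B₁ A₂ B₂ : NW X Y, A₁ * mf * B₁ = w ∧ A₂ * mg * B₂ = w ∧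
      p = mono k A₁ * f * mono k B₁ - mono k A₂ * g * mono k B₂ := by
  obtain ⟨fx, fy⟩ := mf
  obtain ⟨gx, gy⟩ := mg
  simp only [IsComp] at h
  rcases h with ⟨a, b, c, h₁, ⟨rfl, rfl⟩ | ⟨rfl, rfl⟩⟩ | ⟨a, c, d, h₁, ⟨rfl, rfl⟩ | ⟨rfl, rfl⟩⟩ |
    ⟨a, b, c, d, h₁, h₂, rfl, rfl⟩ | ⟨a, b, c, d, h₁, h₂, rfl, rfl⟩ |
    ⟨a, b, c, h₁, -, ⟨rfl, rfl⟩ | ⟨rfl, rfl⟩⟩ | ⟨a, c, d, h₁, -, ⟨rfl, rfl⟩ | ⟨rfl, rfl⟩⟩ |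
    ⟨a, b, c, d, h₁, h₂, -, -, rfl, rfl⟩ | ⟨a, b, c, d, h₁, h₂, -, -, rfl, rfl⟩ |
    ⟨a, b, c, d, h₁, ⟨h₂, -, rfl, rfl⟩ | ⟨h₂, -, rfl, rfl⟩⟩ |
    ⟨a, b, c, d, h₁, -, ⟨h₂, rfl, rfl⟩ | ⟨h₂, rfl, rfl⟩⟩ <;>
  [refine ⟨1, (1, c * gy), (a, fy * c), (b, 1), ?_⟩;
    refine ⟨(1, gy * c), 1, (a, 1), (b, c * fy), ?_⟩;
    refine ⟨1, (a * gx, 1), (fx * a, c), (1, d), ?_⟩;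
    refine ⟨(gx * a, 1), 1, (1, c), (a * fx, d), ?_⟩;
    refine ⟨1, 1, (a, c), (b, d), ?_⟩;
    refine ⟨(1, c), (1, d), (a, 1), (b, 1), ?_⟩;
    refine ⟨1, (a, c * gy), (b, fy * c), 1, ?_⟩;
    refine ⟨(1, gy * c), (a, 1), (b, 1), (1, c * fy), ?_⟩;
    refine ⟨1, (a * gx, c), (fx * a, d), 1, ?_⟩;
    refine ⟨(gx * a, 1), (1, c), (1, d), (a * fx, 1), ?_⟩;
    refine ⟨1, (a, c), (b, d), 1, ?_⟩;
    refine ⟨(1, c), (a, 1), (b, 1), (1, d), ?_⟩;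
    refine ⟨1, (1, c), (a, d), (b, 1), ?_⟩;
    refine ⟨(1, c), 1, (a, 1), (b, d), ?_⟩;
    refine ⟨1, (a, 1), (b, c), (1, d), ?_⟩;
    refine ⟨(1, c), (a, d), (b, 1), 1, ?_⟩] <;>
  simp [mono_one, mul_assoc, *]

theorem isGSB_of_ambiguitiesTrivial {k X Y : Type*} [Ring k] {lt : NW X Y → NW X Y → Prop}
    {S : Set (MonoidAlgebra k (NW X Y))} (hmon : ∀ s ∈ S, MonicR lt s)
    (h : AmbiguitiesTrivial lt S) : IsGSB lt S := by
  refine ⟨hmon, fun f hf g hg mf mg p w hmf hmg hc => ?_⟩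
  obtain ⟨A₁, B₁, A₂, B₂, rfl, hw, rfl⟩ := hc.exists_eq_sub
  exact h hf hg hmf hmg A₁ B₁ A₂ B₂ hw.symm

/-- if `S₁` is a Gröbner–Shirshov basis in `k⟨X⟩` and `S₂` is a
Gröbner–Shirshov basis in `k⟨Y⟩` (for deg-lex orders), then `S₁ ∪ S₂` is a
Gröbner–Shirshov basis in `k⟨X⟩ ⊗ k⟨Y⟩` for the induced deg-lex order on `X*Y*`. -/
theorem stmt_8 {k X Y : Type*} [Field k] [LinearOrder X] [LinearOrder Y]
    (S₁ : Set (MonoidAlgebra k (FreeMonoid X))) (S₂ : Set (MonoidAlgebra k (FreeMonoid Y)))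
    (h₁ : FIsGSB (degLex ((· < ·) : X → X → Prop)) S₁)
    (h₂ : FIsGSB (degLex ((· < ·) : Y → Y → Prop)) S₂) :
    IsGSB (lexNW (degLex ((· < ·) : X → X → Prop)) (degLex ((· < ·) : Y → Y → Prop)))
      ((MonoidAlgebra.mapDomain (fun u : FreeMonoid X => ((u, 1) : NW X Y)) '' S₁) ∪
       (MonoidAlgebra.mapDomain (fun v : FreeMonoid Y => ((1, v) : NW X Y)) '' S₂)) := by
  have hX := degLex_isMulCompatible ((· < ·) : X → X → Prop)
  have hY := degLex_isMulCompatible ((· < ·) : Y → Y → Prop)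
  exact isGSB_of_ambiguitiesTrivial (monicR_of_mem_image_union h₁.1 h₂.1)
    (.image_union_image hX hY h₁.1 (h₁.ambiguitiesTrivial hX) h₂.1 (h₂.ambiguitiesTrivial hY))
end

section
/- Let a, b ∈ X* be sorted words (a = δ(γ(a)), b = δ(γ(b))) and s ∈ k[X]. If w = a·δ(s̄)·b = δ(γ(ab)·s̄), then a·δ(s)·b ≡ δ(γ(ab)·s) modulo (S₁, w), where S₁ = {xᵢxⱼ - xⱼxᵢ : i > j}; i.e., the difference a δ(s) b - δ(γ(ab)s) is a k-linear combination of terms c·h·d with h ∈ S₁, c, d ∈ X*, and leading words < w. -/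
/-!
Expanding `s = Σ cₘ m`, the difference is `Σ cₘ (a·δ(m)·b - δ(γ(a·δ(m)·b)))`, since
`γ(a·δ(m)·b) = γ(ab)·m`. The term `m = s̄` vanishes because `w` is already sorted. Every other
word `a·δ(m)·b` is sorted into `δ(γ(ab)·m)` by adjacent transpositions, and each transposition
is `± c·(xᵢxⱼ - xⱼxᵢ)·d` with a leading word of abelianization `γ(ab)·m < γ(ab)·s̄ = γ(w)`,
hence below `w` in the lifted order.
-/

/-- `TrivModR lt S w` is the case `P = (lt · w)`. -/
def TrivModPred {k M : Type*} [Semiring k] [Monoid M] (lt : M → M → Prop)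
    (S : Set (MonoidAlgebra k M)) (P : M → Prop) (h : MonoidAlgebra k M) : Prop :=
  ∃ (n : ℕ) (α : Fin n → k) (a b : Fin n → M) (s : Fin n → MonoidAlgebra k M),
    (∀ i, s i ∈ S) ∧
    h = ∑ i, α i • (mono k (a i) * s i * mono k (b i)) ∧
    ∀ i, ∃ m, IsLeadR lt (s i) m ∧ P (a i * m * b i)

namespace TrivModPred

section Semiring
variable {k M : Type*} [Semiring k] [Monoid M] {lt : M → M → Prop}
  {S : Set (MonoidAlgebra k M)} {P Q : M → Prop}

theorem zero : TrivModPred lt S P (0 : MonoidAlgebra k M) :=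
  ⟨0, nofun, nofun, nofun, nofun, nofun, by simp, nofun⟩

theorem imp (hPQ : ∀ u, P u → Q u) {h : MonoidAlgebra k M} (hh : TrivModPred lt S P h) :
    TrivModPred lt S Q h := by
  obtain ⟨n, α, a, b, s, hS, rfl, hl⟩ := hh
  exact ⟨n, α, a, b, s, hS, rfl, fun i => (hl i).imp fun m hm => ⟨hm.1, hPQ _ hm.2⟩⟩

theorem add {h₁ h₂ : MonoidAlgebra k M} (hh₁ : TrivModPred lt S P h₁)
    (hh₂ : TrivModPred lt S P h₂) : TrivModPred lt S P (h₁ + h₂) := by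
  obtain ⟨n₁, α₁, a₁, b₁, s₁, hS₁, rfl, hl₁⟩ := hh₁
  obtain ⟨n₂, α₂, a₂, b₂, s₂, hS₂, rfl, hl₂⟩ := hh₂
  refine ⟨n₁ + n₂, Fin.addCases α₁ α₂, Fin.addCases a₁ a₂, Fin.addCases b₁ b₂,
    Fin.addCases s₁ s₂, Fin.addCases (by simpa using hS₁) (by simpa using hS₂), ?_,
    Fin.addCases (by simpa using hl₁) (by simpa using hl₂)⟩
  simp [Fin.sum_univ_add]

theorem sum {ι : Type*} {t : Finset ι} {f : ι → MonoidAlgebra k M}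
    (hf : ∀ i ∈ t, TrivModPred lt S P (f i)) : TrivModPred lt S P (∑ i ∈ t, f i) :=
  Finset.sum_induction f _ (fun _ _ => add) zero hf

theorem smul (c : k) {h : MonoidAlgebra k M} (hh : TrivModPred lt S P h) :
    TrivModPred lt S P (c • h) := by
  obtain ⟨n, α, a, b, s, hS, rfl, hl⟩ := hh
  exact ⟨n, fun i => c * α i, a, b, s, hS, by simp [Finset.smul_sum, smul_smul], hl⟩

theorem of_mem {s : MonoidAlgebra k M} (hs : s ∈ S) {m : M} (hm : IsLeadR lt s m)
    {c d : M} (hP : P (c * m * d)) : TrivModPred lt S P (mono k c * s * mono k d) :=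
  ⟨1, fun _ => 1, fun _ => c, fun _ => d, fun _ => s, fun _ => hs, by simp, fun _ => ⟨m, hm, hP⟩⟩

end Semiring

theorem neg {k M : Type*} [Ring k] [Monoid M] {lt : M → M → Prop}
    {S : Set (MonoidAlgebra k M)} {P : M → Prop} {h : MonoidAlgebra k M}
    (hh : TrivModPred lt S P h) : TrivModPred lt S P (-h) := by
  simpa using hh.smul (-1)

theorem mono_mul_mul_mono {k M : Type*} [CommSemiring k] [Monoid M] {lt : M → M → Prop}
    {S : Set (MonoidAlgebra k M)} {P Q : M → Prop} {h : MonoidAlgebra k M} {c d : M}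
    (hPQ : ∀ u, P u → Q (c * u * d)) (hh : TrivModPred lt S P h) :
    TrivModPred lt S Q (mono k c * h * mono k d) := by
  obtain ⟨n, α, a, b, s, hS, rfl, hl⟩ := hh
  refine ⟨n, α, fun i => c * a i, fun i => b i * d, s, hS, ?_, fun i => ?_⟩
  · simp only [Finset.mul_sum, Finset.sum_mul, mono, map_mul, mul_smul_comm, smul_mul_assoc,
      mul_assoc]
  · obtain ⟨m, hm, hp⟩ := hl i
    exact ⟨m, hm, by simpa [mul_assoc] using hPQ _ hp⟩

end TrivModPred

section Abelianization
variable {X : Type*}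

theorem gam_mul (u v : FreeMonoid X) : gam (u * v) = gam u * gam v := by
  simp [gam, ← ofAdd_add]

theorem gam_ofList_eq_of_perm {l l' : List X} (h : l.Perm l') :
    gam (FreeMonoid.ofList l) = gam (FreeMonoid.ofList l') := by
  simp [gam, Multiset.coe_eq_coe.mpr h]

theorem gam_dword [LinearOrder X] (m : Multiplicative (Multiset X)) : gam (dword m) = m := by
  simp [gam, dword, Multiset.sort_eq]

theorem toList_dword_gam_perm [LinearOrder X] (u : FreeMonoid X) :
    (dword (gam u)).toList.Perm u.toList :=
  Multiset.coe_eq_coe.mp (Multiset.sort_eq (↑u.toList : Multiset X) _)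

end Abelianization

section Sorting
variable {k X : Type*} [LinearOrder X]
  (ltC : Multiplicative (Multiset X) → Multiplicative (Multiset X) → Prop)

theorem isLeadR_commutator [Ring k] [Nontrivial k] {x y : X} (h : y < x) :
    IsLeadR (liftOrd ltC)
      (mono k (FreeMonoid.of x * FreeMonoid.of y) - mono k (FreeMonoid.of y * FreeMonoid.of x))
      (FreeMonoid.of x * FreeMonoid.of y) := by
  classical
  have hne : FreeMonoid.of y * FreeMonoid.of x ≠ FreeMonoid.of x * FreeMonoid.of y := by
    intro he
    have := congrArg FreeMonoid.toList he
    simp at this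
    exact h.ne this.1
  have hgam : gam (FreeMonoid.of y * FreeMonoid.of x) = gam (FreeMonoid.of x * FreeMonoid.of y) :=
    gam_ofList_eq_of_perm (List.Perm.swap x y [])
  simp only [IsLeadR, mono, MonoidAlgebra.of_apply, MonoidAlgebra.coeff_sub,
    MonoidAlgebra.coeff_single, Finsupp.mem_support_iff, Finsupp.sub_apply]
  refine ⟨by simp [Finsupp.single_eq_of_ne hne.symm], fun u hu hux => ?_⟩
  obtain rfl : u = FreeMonoid.of y * FreeMonoid.of x := by
    by_contra huy
    simp [Finsupp.single_eq_of_ne hux, Finsupp.single_eq_of_ne huy] at hu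
  exact Or.inr ⟨hgam, List.Lex.rel h⟩

variable [CommRing k] [Nontrivial k]

theorem trivModPred_swap {x y : X} (h : y < x) (l : List X) :
    TrivModPred (liftOrd ltC) (commSet k X)
      (fun u => gam u = gam (FreeMonoid.ofList (x :: y :: l)))
      (mono k (FreeMonoid.ofList (x :: y :: l)) - mono k (FreeMonoid.ofList (y :: x :: l))) := by
  have hmem : mono k (FreeMonoid.of x * FreeMonoid.of y)
      - mono k (FreeMonoid.of y * FreeMonoid.of x) ∈ commSet k X := ⟨x, y, h, rfl⟩
  have hfactor : mono k (FreeMonoid.ofList (x :: y :: l))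
      - mono k (FreeMonoid.ofList (y :: x :: l))
      = mono k 1 * (mono k (FreeMonoid.of x * FreeMonoid.of y)
        - mono k (FreeMonoid.of y * FreeMonoid.of x)) * mono k (FreeMonoid.ofList l) := by
    simp only [mono, map_one, one_mul, sub_mul, ← map_mul]
    rfl
  rw [hfactor]
  exact .of_mem hmem (isLeadR_commutator ltC h) rfl

theorem trivModPred_sub_of_perm {l l' : List X} (h : l.Perm l') :
    TrivModPred (liftOrd ltC) (commSet k X) (fun u => gam u = gam (FreeMonoid.ofList l))
      (mono k (FreeMonoid.ofList l) - mono k (FreeMonoid.ofList l')) := by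
  induction h with
  | nil => rw [sub_self]; exact .zero
  | cons x _ ih =>
    have hfactor : ∀ l : List X, mono k (FreeMonoid.ofList (x :: l))
        = mono k (FreeMonoid.of x) * mono k (FreeMonoid.ofList l) * mono k 1 := fun l => by
      simp only [mono, map_one, mul_one, ← map_mul]
      rfl
    rw [hfactor, hfactor, ← sub_mul, ← mul_sub]
    refine ih.mono_mul_mul_mono fun u hu => ?_
    rw [mul_one, gam_mul, hu, ← gam_mul]
    rfl
  | swap x y l =>
    rcases lt_trichotomy x y with hxy | rfl | hyx
    · exact trivModPred_swap ltC hxy l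
    · rw [sub_self]; exact .zero
    · rw [← neg_sub]
      exact (trivModPred_swap ltC hyx l).neg.imp fun u hu =>
        hu.trans (gam_ofList_eq_of_perm (List.Perm.swap y x l))
  | trans h₁ _ ih₁ ih₂ =>
    rw [← sub_add_sub_cancel]
    exact ih₁.add (ih₂.imp fun u hu => hu.trans (gam_ofList_eq_of_perm h₁).symm)

theorem trivModPred_sub_dword_gam (u : FreeMonoid X) :
    TrivModPred (liftOrd ltC) (commSet k X) (fun v => gam v = gam u)
      (mono k u - mono k (dword (gam u))) := by
  simpa using trivModPred_sub_of_perm (k := k) ltC (toList_dword_gam_perm u).symm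

end Sorting

section Splitting
variable {k X : Type*} [Semiring k] [LinearOrder X]

theorem deltaMap_eq_sum (s : MonoidAlgebra k (Multiplicative (Multiset X))) :
    deltaMap s = ∑ m ∈ s.coeff.support, s.coeff m • mono k (dword m) := by
  apply MonoidAlgebra.coeff_injective
  simp [deltaMap, MonoidAlgebra.mapDomain, Finsupp.mapDomain, Finsupp.sum, mono,
    MonoidAlgebra.of_apply]

theorem mono_mul_deltaMap_mul_mono (a b : FreeMonoid X)
    (s : MonoidAlgebra k (Multiplicative (Multiset X))) :
    mono k a * deltaMap s * mono k b
      = ∑ m ∈ s.coeff.support, s.coeff m • mono k (a * dword m * b) := by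
  rw [deltaMap_eq_sum, Finset.mul_sum, Finset.sum_mul]
  simp [mono, MonoidAlgebra.of_apply]

theorem deltaMap_mono_mul (g : Multiplicative (Multiset X))
    (s : MonoidAlgebra k (Multiplicative (Multiset X))) :
    deltaMap (mono k g * s) = ∑ m ∈ s.coeff.support, s.coeff m • mono k (dword (g * m)) := by
  have hmul : mono k g * s = ∑ m ∈ s.coeff.support, s.coeff m • mono k (g * m) := by
    conv_lhs => rw [← MonoidAlgebra.sum_coeff_single s]
    simp [Finsupp.sum, Finset.mul_sum, mono, MonoidAlgebra.of_apply]
  rw [hmul]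
  apply MonoidAlgebra.coeff_injective
  simp [deltaMap, MonoidAlgebra.mapDomain, Finsupp.mapDomain_finsetSum, mono,
    MonoidAlgebra.of_apply]

end Splitting

theorem stmt_13_general {k X : Type*} [Field k] [LinearOrder X]
    (ltC : Multiplicative (Multiset X) → Multiplicative (Multiset X) → Prop)
    (hC : MonOrd ltC)
    (a b : FreeMonoid X)
    (s : MonoidAlgebra k (Multiplicative (Multiset X)))
    (ms : Multiplicative (Multiset X)) (hms : IsLeadR ltC s ms)
    (w : FreeMonoid X)
    (hw : w = a * dword ms * b) (hw' : w = dword (gam a * gam b * ms)) :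
    TrivModR (liftOrd ltC) (commSet k X) w
      (mono k a * deltaMap s * mono k b - deltaMap (mono k (gam a * gam b) * s)) := by
  have hgam : ∀ m, gam (a * dword m * b) = gam a * gam b * m := fun m => by
    rw [gam_mul, gam_mul, gam_dword, mul_right_comm]
  have hexpand : mono k a * deltaMap s * mono k b - deltaMap (mono k (gam a * gam b) * s)
      = ∑ m ∈ s.coeff.support,
          s.coeff m • (mono k (a * dword m * b) - mono k (dword (gam (a * dword m * b)))) := by
    simp only [mono_mul_deltaMap_mul_mono, deltaMap_mono_mul, ← Finset.sum_sub_distrib, hgam,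
      smul_sub]
  show TrivModPred (liftOrd ltC) (commSet k X) (liftOrd ltC · w) _
  rw [hexpand]
  refine TrivModPred.sum fun m hm => .smul _ ?_
  obtain rfl | hne := eq_or_ne m ms
  · have hsorted : dword (gam w) = w := by rw [hw', gam_dword]
    rw [← hw, hsorted, sub_self]
    exact .zero
  · refine (trivModPred_sub_dword_gam ltC _).imp fun v hv => Or.inl ?_
    rw [hv, hgam, hw', gam_dword]
    simpa using hC.2.2 m ms (gam a * gam b) 1 (hms.2 m hm hne)

/-- for sorted words `a, b ∈ X*` and `s ∈ k[X]`, if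
`w = a·δ(s̄)·b = δ(γ(ab)·s̄)` then `a·δ(s)·b ≡ δ(γ(ab)·s)` modulo `(S₁, w)`, where
`S₁ = {xᵢxⱼ - xⱼxᵢ : i > j}`. -/
theorem stmt_13 {k X : Type*} [Field k] [LinearOrder X]
    (hwf : WellFounded ((· < ·) : X → X → Prop))
    (ltC : Multiplicative (Multiset X) → Multiplicative (Multiset X) → Prop)
    (hC : MonOrd ltC)
    (a b : FreeMonoid X) (ha : a = dword (gam a)) (hb : b = dword (gam b))
    (s : MonoidAlgebra k (Multiplicative (Multiset X)))
    (ms : Multiplicative (Multiset X)) (hms : IsLeadR ltC s ms)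
    (w : FreeMonoid X)
    (hw : w = a * dword ms * b) (hw' : w = dword (gam a * gam b * ms)) :
    TrivModR (liftOrd ltC) (commSet k X) w
      (mono k a * deltaMap s * mono k b - deltaMap (mono k (gam a * gam b) * s)) :=
  stmt_13_general ltC hC a b s ms hms w hw hw'
end
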